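/- arXiv:1909.11769 — 4 statements merged into one kernel-verified Lean document; each statement's English description precedes it below -/
import Mathlib

section
/- The function d₀(X,Y) = -log m(X,Y) - log m(Y,X) is a metric on the set of D×D positive definite matrices of trace 1 (it is symmetric, nonnegative, zero iff X = Y, and satisfies the triangle inequality). -/
/-!
In the Loewner order, `m(X,Y)` is the largest `λ` with `λ • Y ≤ X`. The supremum is attained
because the positive cone is closed, and it is positive because `r • 1 ≤ X` for some `r > 0`
while `Y ≤ ‖Y‖ • 1`. Chaining `λ • Y ≤ X` and `μ • Z ≤ Y` gives `(λ * μ) • Z ≤ X`, so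
`m(X,Y) * m(Y,Z) ≤ m(X,Z)`, and taking logarithms yields the triangle inequality. Comparing
traces gives `m ≤ 1`, hence `d₀ ≥ 0`, and `d₀(X,Y) = 0` forces `m(X,Y) = m(Y,X) = 1`, that is
`Y ≤ X ≤ Y`.
-/

open Matrix
open scoped ComplexOrder

/-- `m(X,Y) = sup {λ : X - λY ⪰ 0}`. -/
noncomputable def mfun {D : ℕ} (X Y : Matrix (Fin D) (Fin D) ℂ) : ℝ :=
  sSup {l : ℝ | (X - l • Y).PosSemidef}


/-- `d₀(X,Y) = -log m(X,Y) - log m(Y,X)`. -/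
noncomputable def dzero {D : ℕ} (X Y : Matrix (Fin D) (Fin D) ℂ) : ℝ :=
  - Real.log (mfun X Y) - Real.log (mfun Y X)

open scoped MatrixOrder Matrix.Norms.L2Operator

noncomputable def lowerRatio {E : Type*} [LE E] [SMul ℝ E] (x y : E) : ℝ :=
  sSup {l : ℝ | l • y ≤ x}

section OrderedModule

variable {E : Type*} [AddCommGroup E] [PartialOrder E] [Module ℝ E] {x y z : E} {l c : ℝ}

lemma le_lowerRatio (hb : BddAbove {l : ℝ | l • y ≤ x}) (h : l • y ≤ x) : l ≤ lowerRatio x y :=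
  le_csSup hb h

lemma lowerRatio_le (hx : 0 ≤ x) (h : ∀ l : ℝ, l • y ≤ x → l ≤ c) : lowerRatio x y ≤ c :=
  csSup_le ⟨0, by simpa using hx⟩ h

lemma lowerRatio_nonneg (hx : 0 ≤ x) (hb : BddAbove {l : ℝ | l • y ≤ x}) : 0 ≤ lowerRatio x y :=
  le_lowerRatio hb (by simpa using hx)

lemma lowerRatio_self (hx : 0 ≤ x) (h : ∀ l : ℝ, l • x ≤ x → l ≤ 1) : lowerRatio x x = 1 :=
  le_antisymm (lowerRatio_le hx h) (le_lowerRatio ⟨1, h⟩ (by simp))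

variable [TopologicalSpace E] [OrderClosedTopology E] [ContinuousSMul ℝ E]

lemma lowerRatio_smul_le (hx : 0 ≤ x) (hb : BddAbove {l : ℝ | l • y ≤ x}) :
    lowerRatio x y • y ≤ x :=
  (isClosed_le (continuous_id.smul continuous_const) continuous_const).csSup_mem
    ⟨0, by simpa using hx⟩ hb

lemma lowerRatio_mul_le [PosSMulMono ℝ E] (hx : 0 ≤ x) (hy : 0 ≤ y)
    (hxy : BddAbove {l : ℝ | l • y ≤ x}) (hyz : BddAbove {l : ℝ | l • z ≤ y})
    (hxz : BddAbove {l : ℝ | l • z ≤ x}) :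
    lowerRatio x y * lowerRatio y z ≤ lowerRatio x z := by
  refine le_lowerRatio hxz ?_
  rw [mul_smul]
  exact (smul_le_smul_of_nonneg_left (lowerRatio_smul_le hy hyz) (lowerRatio_nonneg hx hxy)).trans
    (lowerRatio_smul_le hx hxy)

lemma eq_of_lowerRatio_eq_one (hx : 0 ≤ x) (hy : 0 ≤ y) (hxy : BddAbove {l : ℝ | l • y ≤ x})
    (hyx : BddAbove {l : ℝ | l • x ≤ y}) (h₁ : lowerRatio x y = 1) (h₂ : lowerRatio y x = 1) :
    x = y := by
  have hyx' := lowerRatio_smul_le hx hxy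
  have hxy' := lowerRatio_smul_le hy hyx
  rw [h₁, one_smul] at hyx'
  rw [h₂, one_smul] at hxy'
  exact le_antisymm hxy' hyx'

end OrderedModule

lemma IsStrictlyPositive.exists_pos_smul_le {A : Type*} [CStarAlgebra A] [PartialOrder A]
    [StarOrderedRing A] {x y : A} (hx : IsStrictlyPositive x) (hy : IsSelfAdjoint y) :
    ∃ ε > (0 : ℝ), ε • y ≤ x := by
  cases subsingleton_or_nontrivial A
  · exact ⟨1, one_pos, (Subsingleton.elim _ _).le⟩
  obtain ⟨r, hr, hrx⟩ := (CFC.exists_pos_algebraMap_le_iff hx.isSelfAdjoint).2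
    fun _ => hx.spectrum_pos
  set ε := r / (‖y‖ + 1)
  have hε : ε * ‖y‖ ≤ r := by
    rw [div_mul_eq_mul_div, div_le_iff₀ (by positivity)]
    nlinarith [norm_nonneg y]
  refine ⟨ε, by positivity, ?_⟩
  calc ε • y ≤ ε • algebraMap ℝ A ‖y‖ :=
        smul_le_smul_of_nonneg_left hy.le_algebraMap_norm_self (by positivity)
    _ = algebraMap ℝ A (ε * ‖y‖) := by rw [map_mul, Algebra.smul_def]
    _ ≤ algebraMap ℝ A r := algebraMap_mono A hε
    _ ≤ x := hrx

namespace Matrix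

lemma le_one_of_smul_le_of_trace_eq_one {n 𝕜 : Type*} [Fintype n] [RCLike 𝕜]
    {X Y : Matrix n n 𝕜} (hX : X.trace = 1) (hY : Y.trace = 1) {l : ℝ} (h : l • Y ≤ X) : l ≤ 1 := by
  have := (le_iff.mp h).trace_nonneg
  rw [trace_sub, trace_smul, hX, hY, RCLike.real_smul_eq_coe_mul, mul_one, sub_nonneg,
    ← RCLike.ofReal_one, RCLike.ofReal_le_ofReal] at this
  exact this

lemma bddAbove_setOf_smul_le_of_trace_eq_one {n 𝕜 : Type*} [Fintype n] [RCLike 𝕜]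
    {X Y : Matrix n n 𝕜} (hX : X.trace = 1) (hY : Y.trace = 1) :
    BddAbove {l : ℝ | l • Y ≤ X} :=
  ⟨1, fun _ => le_one_of_smul_le_of_trace_eq_one hX hY⟩

end Matrix

/- Under `MatrixOrder`, `l • Y ≤ X` unfolds to `(X - l • Y).PosSemidef`, so `mfun` is
definitionally `lowerRatio`. -/
section UnitTrace

variable {D : ℕ} {X Y Z : Matrix (Fin D) (Fin D) ℂ}

lemma mfun_pos (hX : X.PosDef) (hY : Y.PosDef) (hXtr : X.trace = 1) (hYtr : Y.trace = 1) :
    0 < mfun X Y := by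
  obtain ⟨ε, hε, h⟩ := hX.isStrictlyPositive.exists_pos_smul_le hY.isHermitian.isSelfAdjoint
  exact hε.trans_le (le_lowerRatio (bddAbove_setOf_smul_le_of_trace_eq_one hXtr hYtr) h)

lemma mfun_le_one (hX : X.PosSemidef) (hXtr : X.trace = 1) (hYtr : Y.trace = 1) :
    mfun X Y ≤ 1 :=
  lowerRatio_le (nonneg_iff_posSemidef.mpr hX) fun _ =>
    le_one_of_smul_le_of_trace_eq_one hXtr hYtr

lemma mfun_self (hX : X.PosSemidef) (hXtr : X.trace = 1) : mfun X X = 1 :=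
  lowerRatio_self (nonneg_iff_posSemidef.mpr hX) fun _ =>
    le_one_of_smul_le_of_trace_eq_one hXtr hXtr

lemma mfun_mul_le (hX : X.PosSemidef) (hY : Y.PosSemidef) (hXtr : X.trace = 1)
    (hYtr : Y.trace = 1) (hZtr : Z.trace = 1) : mfun X Y * mfun Y Z ≤ mfun X Z :=
  lowerRatio_mul_le (nonneg_iff_posSemidef.mpr hX) (nonneg_iff_posSemidef.mpr hY)
    (bddAbove_setOf_smul_le_of_trace_eq_one hXtr hYtr)
    (bddAbove_setOf_smul_le_of_trace_eq_one hYtr hZtr)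
    (bddAbove_setOf_smul_le_of_trace_eq_one hXtr hZtr)

lemma eq_of_mfun_eq_one (hX : X.PosSemidef) (hY : Y.PosSemidef) (hXtr : X.trace = 1)
    (hYtr : Y.trace = 1) (hXY : mfun X Y = 1) (hYX : mfun Y X = 1) : X = Y :=
  eq_of_lowerRatio_eq_one (nonneg_iff_posSemidef.mpr hX) (nonneg_iff_posSemidef.mpr hY)
    (bddAbove_setOf_smul_le_of_trace_eq_one hXtr hYtr)
    (bddAbove_setOf_smul_le_of_trace_eq_one hYtr hXtr) hXY hYX

lemma log_mfun_nonpos (hX : X.PosDef) (hY : Y.PosDef) (hXtr : X.trace = 1)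
    (hYtr : Y.trace = 1) : Real.log (mfun X Y) ≤ 0 :=
  Real.log_nonpos (mfun_pos hX hY hXtr hYtr).le (mfun_le_one hX.posSemidef hXtr hYtr)

lemma log_mfun_add_log_mfun_le (hX : X.PosDef) (hY : Y.PosDef) (hZ : Z.PosDef)
    (hXtr : X.trace = 1) (hYtr : Y.trace = 1) (hZtr : Z.trace = 1) :
    Real.log (mfun X Y) + Real.log (mfun Y Z) ≤ Real.log (mfun X Z) := by
  have hXY := mfun_pos hX hY hXtr hYtr
  have hYZ := mfun_pos hY hZ hYtr hZtr
  rw [← Real.log_mul hXY.ne' hYZ.ne']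
  exact Real.log_le_log (mul_pos hXY hYZ) (mfun_mul_le hX.posSemidef hY.posSemidef hXtr hYtr hZtr)

lemma dzero_comm (X Y : Matrix (Fin D) (Fin D) ℂ) : dzero X Y = dzero Y X := by
  rw [dzero, dzero]
  ring

lemma dzero_nonneg (hX : X.PosDef) (hY : Y.PosDef) (hXtr : X.trace = 1) (hYtr : Y.trace = 1) :
    0 ≤ dzero X Y := by
  have hXY := log_mfun_nonpos hX hY hXtr hYtr
  have hYX := log_mfun_nonpos hY hX hYtr hXtr
  rw [dzero]
  linarith

lemma dzero_eq_zero_iff (hX : X.PosDef) (hY : Y.PosDef) (hXtr : X.trace = 1)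
    (hYtr : Y.trace = 1) : dzero X Y = 0 ↔ X = Y := by
  refine ⟨fun h => ?_, by rintro rfl; simp [dzero, mfun_self hX.posSemidef hXtr]⟩
  have hXY := log_mfun_nonpos hX hY hXtr hYtr
  have hYX := log_mfun_nonpos hY hX hYtr hXtr
  rw [dzero] at h
  refine eq_of_mfun_eq_one hX.posSemidef hY.posSemidef hXtr hYtr ?_ ?_
  · exact Real.eq_one_of_pos_of_log_eq_zero (mfun_pos hX hY hXtr hYtr) (by linarith)
  · exact Real.eq_one_of_pos_of_log_eq_zero (mfun_pos hY hX hYtr hXtr) (by linarith)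

lemma dzero_le_add (hX : X.PosDef) (hY : Y.PosDef) (hZ : Z.PosDef) (hXtr : X.trace = 1)
    (hYtr : Y.trace = 1) (hZtr : Z.trace = 1) : dzero X Z ≤ dzero X Y + dzero Y Z := by
  have hXYZ := log_mfun_add_log_mfun_le hX hY hZ hXtr hYtr hZtr
  have hZYX := log_mfun_add_log_mfun_le hZ hY hX hZtr hYtr hXtr
  rw [dzero, dzero, dzero]
  linarith

end UnitTrace

theorem stmt4 {D : ℕ} :
    (∀ X Y : Matrix (Fin D) (Fin D) ℂ, X.PosDef → Y.PosDef → X.trace = 1 → Y.trace = 1 →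
      dzero X Y = dzero Y X) ∧
    (∀ X Y : Matrix (Fin D) (Fin D) ℂ, X.PosDef → Y.PosDef → X.trace = 1 → Y.trace = 1 →
      0 ≤ dzero X Y) ∧
    (∀ X Y : Matrix (Fin D) (Fin D) ℂ, X.PosDef → Y.PosDef → X.trace = 1 → Y.trace = 1 →
      (dzero X Y = 0 ↔ X = Y)) ∧
    (∀ X Y Z : Matrix (Fin D) (Fin D) ℂ, X.PosDef → Y.PosDef → Z.PosDef →
      X.trace = 1 → Y.trace = 1 → Z.trace = 1 →
      dzero X Z ≤ dzero X Y + dzero Y Z) :=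
  ⟨fun X Y _ _ _ _ => dzero_comm X Y,
    fun _ _ => dzero_nonneg, fun _ _ => dzero_eq_zero_iff, fun _ _ _ => dzero_le_add⟩
end

section
/- For X, Y positive semi-definite D×D trace-one matrices, d(X,Y) ≥ (1/2)·tr|X - Y|, i.e., the projective metric d dominates half the trace-norm distance. -/
/-!
If `X - λY ⪰ 0` for trace-one `X, Y ⪰ 0`, then `λ ≤ 1` and `X - Y = (X - λY) - (1 - λ)Y` is a
difference of two positive matrices of trace `1 - λ` each, so `tr|X - Y| ≤ 2(1 - λ)`. Hence, with
`t = tr|X - Y| / 2`, both `m(X,Y)` and `m(Y,X)` lie in `[0, 1 - t]`, and then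
`(1 - m(X,Y)m(Y,X)) / (1 + m(X,Y)m(Y,X)) ≥ (1 - (1 - t)²) / (1 + (1 - t)²) ≥ t`.
-/

open Matrix
open scoped ComplexOrder

/-- The projective metric `d(X,Y) = (1 - m(X,Y)m(Y,X))/(1 + m(X,Y)m(Y,X))`. -/
noncomputable def dfun {D : ℕ} (X Y : Matrix (Fin D) (Fin D) ℂ) : ℝ :=
  (1 - mfun X Y * mfun Y X) / (1 + mfun X Y * mfun Y X)

/-- The trace norm `tr|M|`: the sum of the singular values of `M`. -/
noncomputable def traceNorm {D : ℕ} (M : Matrix (Fin D) (Fin D) ℂ) : ℝ :=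
  ∑ i, Real.sqrt ((Matrix.isHermitian_conjTranspose_mul_self M).eigenvalues i)

namespace Matrix

variable {𝕜 n ι : Type*} [RCLike 𝕜] [Fintype n] [DecidableEq n] [Fintype ι]

lemma trace_eq_sum_star_dotProduct_mulVec (M : Matrix n n 𝕜)
    (b : OrthonormalBasis ι 𝕜 (EuclideanSpace 𝕜 n)) :
    M.trace = ∑ i, star ⇑(b i) ⬝ᵥ (M *ᵥ ⇑(b i)) := by
  have key := (LinearMap.trace_eq_sum_inner (toEuclideanLin M) b).symm.trans
    (LinearMap.trace_eq_sum_inner (toEuclideanLin M) (EuclideanSpace.basisFun n 𝕜))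
  simp only [EuclideanSpace.inner_eq_star_dotProduct, toLpLin_apply] at key
  simp [dotProduct_comm, key, trace]

lemma IsHermitian.trace_cfc {A : Matrix n n 𝕜} (hA : A.IsHermitian) (f : ℝ → ℝ) :
    (cfc f A).trace = ∑ i, (f (hA.eigenvalues i) : 𝕜) := by
  rw [hA.cfc_eq, IsHermitian.cfc, Unitary.conjStarAlgAut_apply, trace_mul_cycle,
    Unitary.coe_star_mul_self, one_mul, trace_diagonal]
  rfl

lemma IsHermitian.sum_abs_eigenvalues_le {A P N : Matrix n n 𝕜} (hA : A.IsHermitian)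
    (hP : P.PosSemidef) (hN : N.PosSemidef) (hAPN : A = P - N) :
    ∑ i, |hA.eigenvalues i| ≤ RCLike.re (P.trace + N.trace) := by
  set v := hA.eigenvectorBasis
  set q : Matrix n n 𝕜 → n → ℝ := fun M i => RCLike.re (star ⇑(v i) ⬝ᵥ (M *ᵥ ⇑(v i)))
  have hq (M : Matrix n n 𝕜) (hM : M.PosSemidef) (i : n) : |q M i| = q M i :=
    abs_of_nonneg (hM.re_dotProduct_nonneg _)
  have heig (i : n) : hA.eigenvalues i = q P i - q N i := by
    simp only [q, hA.eigenvalues_eq, ← map_sub, ← dotProduct_sub, ← sub_mulVec, ← hAPN, v]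
  calc ∑ i, |hA.eigenvalues i| ≤ ∑ i, (q P i + q N i) := Finset.sum_le_sum fun i _ => by
        simpa only [heig, hq P hP, hq N hN] using abs_sub (q P i) (q N i)
    _ = RCLike.re (P.trace + N.trace) := by
        simp only [q, trace_eq_sum_star_dotProduct_mulVec _ v, Finset.sum_add_distrib, map_add,
          map_sum]

end Matrix

lemma traceNorm_eq_sum_abs_eigenvalues {D : ℕ} {A : Matrix (Fin D) (Fin D) ℂ}
    (hA : A.IsHermitian) : traceNorm A = ∑ i, |hA.eigenvalues i| := by
  have habs : cfc (fun x : ℝ => |x|) A = cfc Real.sqrt (Aᴴ * A) := by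
    rw [hA.eq, ← sq, ← cfc_pow_id (R := ℝ) A 2, ← cfc_comp' Real.sqrt (· ^ 2) A]
    simp only [Real.sqrt_sq_eq_abs]
  have h := (isHermitian_conjTranspose_mul_self A).trace_cfc Real.sqrt
  rw [← habs, hA.trace_cfc] at h
  exact_mod_cast h.symm

lemma traceNorm_nonneg {D : ℕ} (A : Matrix (Fin D) (Fin D) ℂ) : 0 ≤ traceNorm A :=
  Finset.sum_nonneg fun _ _ => Real.sqrt_nonneg _

lemma traceNorm_sub_comm {D : ℕ} (A B : Matrix (Fin D) (Fin D) ℂ) :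
    traceNorm (A - B) = traceNorm (B - A) := by
  have h : (A - B)ᴴ * (A - B) = (B - A)ᴴ * (B - A) := by
    rw [← neg_sub B A, conjTranspose_neg, neg_mul_neg]
  simp only [traceNorm, h]

lemma traceNorm_sub_le {D : ℕ} {P N : Matrix (Fin D) (Fin D) ℂ} (hP : P.PosSemidef)
    (hN : N.PosSemidef) : traceNorm (P - N) ≤ (P.trace + N.trace).re := by
  have hA : (P - N).IsHermitian := hP.isHermitian.sub hN.isHermitian
  rw [traceNorm_eq_sum_abs_eigenvalues hA]
  exact hA.sum_abs_eigenvalues_le hP hN rfl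

section TraceOne

variable {D : ℕ} {X Y : Matrix (Fin D) (Fin D) ℂ}

lemma trace_sub_smul_of_trace_eq_one (hXt : X.trace = 1) (hYt : Y.trace = 1) (l : ℝ) :
    (X - l • Y).trace = ((1 - l : ℝ) : ℂ) := by
  simp [hXt, hYt, Complex.real_smul]

lemma le_one_sub_traceNorm_of_posSemidef_sub_smul (hY : Y.PosSemidef) (hXt : X.trace = 1)
    (hYt : Y.trace = 1) {l : ℝ} (hl : (X - l • Y).PosSemidef) :
    l ≤ 1 - traceNorm (X - Y) / 2 := by
  have hl1 : l ≤ 1 := by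
    have := hl.trace_nonneg
    rw [trace_sub_smul_of_trace_eq_one hXt hYt, Complex.zero_le_real] at this
    linarith
  have hdecomp : X - Y = (X - l • Y) - (1 - l) • Y := by
    rw [sub_smul, one_smul]
    abel
  have hbound : traceNorm (X - Y) ≤ ((X - l • Y).trace + ((1 - l) • Y).trace).re :=
    hdecomp ▸ traceNorm_sub_le hl (hY.smul (sub_nonneg.mpr hl1))
  have htrace : ((X - l • Y).trace + ((1 - l) • Y).trace).re = 2 * (1 - l) := by
    rw [trace_sub_smul_of_trace_eq_one hXt hYt, trace_smul, hYt, Complex.real_smul, mul_one,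
      ← Complex.ofReal_add, Complex.ofReal_re]
    ring
  linarith

lemma mfun_le_one_sub_traceNorm (hX : X.PosSemidef) (hY : Y.PosSemidef) (hXt : X.trace = 1)
    (hYt : Y.trace = 1) : mfun X Y ≤ 1 - traceNorm (X - Y) / 2 :=
  csSup_le ⟨0, by simpa using hX⟩ fun _ hl =>
    le_one_sub_traceNorm_of_posSemidef_sub_smul hY hXt hYt hl

lemma mfun_nonneg (hX : X.PosSemidef) (hY : Y.PosSemidef) (hXt : X.trace = 1)
    (hYt : Y.trace = 1) : 0 ≤ mfun X Y :=
  le_csSup ⟨_, fun _ hl => le_one_sub_traceNorm_of_posSemidef_sub_smul hY hXt hYt hl⟩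
    (by simpa using hX)

end TraceOne

lemma le_one_sub_mul_div_one_add_mul {t a b : ℝ} (ht : 0 ≤ t) (ha : 0 ≤ a) (hb : 0 ≤ b)
    (hat : a ≤ 1 - t) (hbt : b ≤ 1 - t) : t ≤ (1 - a * b) / (1 + a * b) := by
  have hab : a * b ≤ (1 - t) ^ 2 := by rw [sq]; exact mul_le_mul hat hbt hb (ha.trans hat)
  rw [le_div_iff₀ (by positivity)]
  nlinarith [mul_nonneg (ha.trans hat) (sq_nonneg t)]

theorem stmt9 {D : ℕ} (X Y : Matrix (Fin D) (Fin D) ℂ)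
    (hX : X.PosSemidef) (hY : Y.PosSemidef)
    (hXt : X.trace = 1) (hYt : Y.trace = 1) :
    (1 / 2) * traceNorm (X - Y) ≤ dfun X Y := by
  have hYX := mfun_le_one_sub_traceNorm hY hX hYt hXt
  rw [traceNorm_sub_comm] at hYX
  rw [one_div_mul_eq_div]
  exact le_one_sub_mul_div_one_add_mul (by linarith [traceNorm_nonneg (X - Y)])
    (mfun_nonneg hX hY hXt hYt) (mfun_nonneg hY hX hYt hXt)
    (mfun_le_one_sub_traceNorm hX hY hXt hYt) hYX
end

section
/- Let φ be a positive linear map on D×D matrices with no nonzero positive semi-definite matrix in ker φ or ker φ*, and let φ' be a strictly positive linear map (mapping nonzero positive semi-definite matrices to positive definite ones). Then both compositions φ∘φ' and φ'∘φ are strictly positive. -/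
/-!
Strict positivity of `φ' ∘ φ` is immediate: a nonzero `M ⪰ 0` has `φ M ⪰ 0` and `φ M ≠ 0`.
For `φ ∘ φ'` it suffices that `φ` maps positive definite matrices to positive definite ones.
The adjoint `φ*` of a positive map is positive, since `⟨v, φ*(A) v⟩ = tr(A φ(v v*)) ≥ 0`.
If `P ≻ 0` and `⟨x, φ(P) x⟩ = 0`, then `tr(φ*(x x*) P) = 0` with `φ*(x x*) ⪰ 0`, which forces
`φ*(x x*) = 0`, hence `x x* = 0` and `x = 0`.
-/

open Matrix
open scoped ComplexOrder

namespace Matrix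

variable {m n : Type*} [Fintype m] [Fintype n]

/-- Over `ℂ` a nonnegative quadratic form is automatically Hermitian. -/
theorem posSemidef_of_forall_dotProduct_mulVec_nonneg {A : Matrix n n ℂ}
    (h : ∀ x, 0 ≤ star x ⬝ᵥ (A *ᵥ x)) : A.PosSemidef := by
  classical
  rw [← isPositive_toEuclideanLin_iff, LinearMap.isPositive_iff_complex]
  intro x
  obtain ⟨hre, him⟩ := Complex.nonneg_iff.mp (h x.ofLp)
  have hreal : star (star x.ofLp ⬝ᵥ (A *ᵥ x.ofLp)) = star x.ofLp ⬝ᵥ (A *ᵥ x.ofLp) :=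
    Complex.conj_eq_iff_im.mpr him.symm
  have hinner : x.ofLp ⬝ᵥ star (A *ᵥ x.ofLp) = star x.ofLp ⬝ᵥ (A *ᵥ x.ofLp) := by
    rw [← hreal, star_dotProduct, star_star, dotProduct_comm]
  simp only [EuclideanSpace.inner_eq_star_dotProduct, toLpLin_apply, hinner,
    RCLike.re_to_complex]
  exact ⟨Complex.conj_eq_iff_re.mp hreal, hre⟩

theorem trace_mul_vecMulVec_star (A : Matrix n n ℂ) (v : n → ℂ) :
    (A * vecMulVec v (star v)).trace = star v ⬝ᵥ (A *ᵥ v) := by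
  rw [mul_vecMulVec, trace_vecMulVec, dotProduct_comm]

open scoped MatrixOrder in
theorem PosSemidef.exists_eq_conjTranspose_mul_self {A : Matrix n n ℂ} (hA : A.PosSemidef) :
    ∃ X : Matrix n n ℂ, A = Xᴴ * X := by
  classical
  exact CStarAlgebra.nonneg_iff_eq_star_mul_self.mp hA.nonneg

theorem PosSemidef.trace_mul_nonneg {A B : Matrix n n ℂ} (hA : A.PosSemidef)
    (hB : B.PosSemidef) : 0 ≤ (A * B).trace := by
  obtain ⟨X, rfl⟩ := hA.exists_eq_conjTranspose_mul_self
  rw [Matrix.mul_assoc, trace_mul_comm]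
  exact (hB.mul_mul_conjTranspose_same X).trace_nonneg

theorem PosSemidef.eq_zero_of_trace_mul_posDef_eq_zero {A B : Matrix n n ℂ}
    (hA : A.PosSemidef) (hB : B.PosDef) (h : (A * B).trace = 0) : A = 0 := by
  obtain ⟨X, rfl⟩ := hA.exists_eq_conjTranspose_mul_self
  rw [Matrix.mul_assoc, trace_mul_comm] at h
  have hXBX : X * B * Xᴴ = 0 :=
    (hB.posSemidef.mul_mul_conjTranspose_same X).trace_eq_zero_iff.mp h
  have hXv : ∀ v, Xᴴ *ᵥ v = 0 := fun v => by
    by_contra hne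
    have hpos := hB.dotProduct_mulVec_pos hne
    rw [star_mulVec, ← dotProduct_mulVec, mulVec_mulVec, mulVec_mulVec,
      conjTranspose_conjTranspose, hXBX, zero_mulVec, dotProduct_zero] at hpos
    exact hpos.false
  classical
  have hX : Xᴴ = 0 := ext_of_mulVec_single fun i => by rw [hXv, zero_mulVec]
  rw [hX, Matrix.zero_mul]

section AdjointPair

variable {φ : Matrix m m ℂ → Matrix n n ℂ} {φs : Matrix n n ℂ → Matrix m m ℂ}

theorem posSemidef_adjoint_apply
    (hadj : ∀ A B, (Aᴴ * φ B).trace = ((φs A)ᴴ * B).trace)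
    (hpos : ∀ M, M.PosSemidef → (φ M).PosSemidef) {A : Matrix n n ℂ} (hA : A.PosSemidef) :
    (φs A).PosSemidef := by
  rw [← posSemidef_conjTranspose_iff]
  refine posSemidef_of_forall_dotProduct_mulVec_nonneg fun v => ?_
  rw [← trace_mul_vecMulVec_star, ← hadj, hA.isHermitian.eq]
  exact hA.trace_mul_nonneg (hpos _ (posSemidef_vecMulVec_self_star v))

theorem posDef_apply_of_posDef
    (hadj : ∀ A B, (Aᴴ * φ B).trace = ((φs A)ᴴ * B).trace)
    (hpos : ∀ M, M.PosSemidef → (φ M).PosSemidef)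
    (hkers : ∀ M, M.PosSemidef → φs M = 0 → M = 0) {P : Matrix m m ℂ} (hP : P.PosDef) :
    (φ P).PosDef := by
  have hφP := hpos P hP.posSemidef
  refine posDef_iff_dotProduct_mulVec.mpr ⟨hφP.isHermitian, fun x hx => ?_⟩
  refine (hφP.dotProduct_mulVec_nonneg x).lt_of_ne fun hzero => hx ?_
  set N := vecMulVec x (star x)
  have hN : N.PosSemidef := posSemidef_vecMulVec_self_star x
  have hφsN := posSemidef_adjoint_apply hadj hpos hN
  have htrace : ((φs N)ᴴ * P).trace = 0 := by
    rw [← hadj, hN.isHermitian.eq, trace_mul_comm, trace_mul_vecMulVec_star, hzero]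
  have hφsN_zero : φs N = 0 :=
    conjTranspose_eq_zero.mp (hφsN.conjTranspose.eq_zero_of_trace_mul_posDef_eq_zero hP htrace)
  simpa [N] using hkers N hN hφsN_zero

end AdjointPair

end Matrix

theorem stmt11 {D : ℕ}
    (φ φs φ' : Matrix (Fin D) (Fin D) ℂ →ₗ[ℂ] Matrix (Fin D) (Fin D) ℂ)
    (hadj : ∀ A B : Matrix (Fin D) (Fin D) ℂ, (Aᴴ * φ B).trace = ((φs A)ᴴ * B).trace)
    (hpos : ∀ M : Matrix (Fin D) (Fin D) ℂ, M.PosSemidef → (φ M).PosSemidef)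
    (hker : ∀ M : Matrix (Fin D) (Fin D) ℂ, M.PosSemidef → φ M = 0 → M = 0)
    (hkers : ∀ M : Matrix (Fin D) (Fin D) ℂ, M.PosSemidef → φs M = 0 → M = 0)
    (hstrict : ∀ M : Matrix (Fin D) (Fin D) ℂ, M.PosSemidef → M ≠ 0 → (φ' M).PosDef) :
    (∀ M : Matrix (Fin D) (Fin D) ℂ, M.PosSemidef → M ≠ 0 → ((φ.comp φ') M).PosDef) ∧
    (∀ M : Matrix (Fin D) (Fin D) ℂ, M.PosSemidef → M ≠ 0 → ((φ'.comp φ) M).PosDef) :=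
  ⟨fun M hM hM0 => posDef_apply_of_posDef hadj hpos hkers (hstrict M hM hM0),
    fun M hM hM0 => hstrict (φ M) (hpos M hM) fun hφM => hM0 (hker M hM hφM)⟩
end

section
/- A positive linear map φ on D×D complex matrices is strictly positive if and only if its Hilbert–Schmidt adjoint φ* is strictly positive. -/
/-!
Testing `φ*(M)` against a rank-one projection `x xᴴ` gives
`xᴴ φ*(M)ᴴ x = tr(M φ(x xᴴ))`, and the trace of the product of a nonzero positive
semidefinite matrix with a positive definite one is positive. So strict positivity passes
from a map to its adjoint, and the adjoint relation is symmetric.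
-/

open Matrix
open scoped ComplexOrder

namespace Matrix

variable {n : Type*} [Fintype n]

lemma trace_mul_vecMulVec {R : Type*} [CommSemiring R] (A : Matrix n n R) (x y : n → R) :
    (A * vecMulVec x y).trace = y ⬝ᵥ A *ᵥ x := by
  rw [mul_vecMulVec, trace_vecMulVec, dotProduct_comm]

lemma trace_conjTranspose_mul_eq_star {R : Type*} [CommRing R] [StarRing R]
    (A B : Matrix n n R) : (Aᴴ * B).trace = star (Bᴴ * A).trace := by
  rw [← trace_conjTranspose, conjTranspose_mul, conjTranspose_conjTranspose]

def IsTraceAdjoint {R : Type*} [Semiring R] [StarRing R] (f g : Matrix n n R → Matrix n n R) :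
    Prop :=
  ∀ A B, (Aᴴ * f B).trace = ((g A)ᴴ * B).trace

lemma IsTraceAdjoint.symm {R : Type*} [CommRing R] [StarRing R]
    {f g : Matrix n n R → Matrix n n R} (h : IsTraceAdjoint f g) : IsTraceAdjoint g f :=
  fun A B => by
    rw [trace_conjTranspose_mul_eq_star, ← h, ← trace_conjTranspose_mul_eq_star]

variable [DecidableEq n]

lemma isHermitian_of_forall_dotProduct_mulVec_nonneg {A : Matrix n n ℂ}
    (h : ∀ x, 0 ≤ star x ⬝ᵥ A *ᵥ x) : A.IsHermitian := by
  rw [← isSymmetric_toEuclideanLin_iff, LinearMap.isSymmetric_iff_inner_map_self_real]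
  intro v
  obtain ⟨x, rfl⟩ := (WithLp.equiv 2 (n → ℂ)).symm.surjective v
  simp only [WithLp.equiv_symm_apply, toLpLin_toLp, EuclideanSpace.inner_toLp_toLp,
    toLin'_apply]
  rw [dotProduct_comm, star_dotProduct, Complex.star_def, Complex.conj_conj]
  exact (Complex.conj_eq_iff_im.mpr (Complex.nonneg_iff.mp (h x)).2.symm).symm

lemma posDef_of_forall_dotProduct_mulVec_pos {A : Matrix n n ℂ}
    (h : ∀ x, x ≠ 0 → 0 < star x ⬝ᵥ A *ᵥ x) : A.PosDef := by
  refine PosDef.of_dotProduct_mulVec_pos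
    (isHermitian_of_forall_dotProduct_mulVec_nonneg fun x => ?_) h
  rcases eq_or_ne x 0 with rfl | hx
  · simp
  · exact (h x hx).le

open scoped MatrixOrder in
lemma PosSemidef.trace_mul_posDef_pos {M P : Matrix n n ℂ} (hM : M.PosSemidef) (hM0 : M ≠ 0)
    (hP : P.PosDef) : 0 < (M * P).trace := by
  set Q := CFC.sqrt P
  have hQQ : Q * Q = P := CFC.sqrt_mul_sqrt_self P hP.posSemidef.nonneg
  have hQ : Q.IsHermitian := (CFC.sqrt_nonneg P).posSemidef.isHermitian
  have hQunit : IsUnit Q := isUnit_of_mul_isUnit_left (hQQ ▸ hP.isUnit)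
  have hQMQ : (Q * M * Q).PosSemidef := by
    simpa only [hQ.eq] using hM.mul_mul_conjTranspose_same Q
  have hQMQ0 : Q * M * Q ≠ 0 := by
    rwa [Ne, hQunit.mul_left_eq_zero, hQunit.mul_right_eq_zero]
  have htr : (M * P).trace = (Q * M * Q).trace := by
    rw [← hQQ, ← mul_assoc, trace_mul_comm, mul_assoc]
  rw [htr]
  exact hQMQ.trace_nonneg.lt_of_ne' (hQMQ.trace_eq_zero_iff.not.mpr hQMQ0)

def IsStrictlyPositiveMap (f : Matrix n n ℂ → Matrix n n ℂ) : Prop :=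
  ∀ M : Matrix n n ℂ, M.PosSemidef → M ≠ 0 → (f M).PosDef

lemma IsTraceAdjoint.isStrictlyPositiveMap {f g : Matrix n n ℂ → Matrix n n ℂ}
    (h : IsTraceAdjoint f g) (hf : IsStrictlyPositiveMap f) : IsStrictlyPositiveMap g := by
  intro M hM hM0
  rw [← posDef_conjTranspose_iff]
  refine posDef_of_forall_dotProduct_mulVec_pos fun x hx => ?_
  have hxx : vecMulVec x (star x) ≠ 0 := by simpa [vecMulVec_eq_zero] using hx
  calc 0 < (M * f (vecMulVec x (star x))).trace :=
        hM.trace_mul_posDef_pos hM0 (hf _ (posSemidef_vecMulVec_self_star x) hxx)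
    _ = ((g M)ᴴ * vecMulVec x (star x)).trace := by rw [← h, hM.isHermitian.eq]
    _ = star x ⬝ᵥ (g M)ᴴ *ᵥ x := trace_mul_vecMulVec _ _ _

end Matrix

theorem stmt12_general {D : ℕ}
    (φ φs : Matrix (Fin D) (Fin D) ℂ →ₗ[ℂ] Matrix (Fin D) (Fin D) ℂ)
    (hadj : ∀ A B : Matrix (Fin D) (Fin D) ℂ, (Aᴴ * φ B).trace = ((φs A)ᴴ * B).trace) :
    (∀ M : Matrix (Fin D) (Fin D) ℂ, M.PosSemidef → M ≠ 0 → (φ M).PosDef) ↔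
    (∀ M : Matrix (Fin D) (Fin D) ℂ, M.PosSemidef → M ≠ 0 → (φs M).PosDef) := by
  have h : IsTraceAdjoint φ φs := hadj
  exact ⟨h.isStrictlyPositiveMap, h.symm.isStrictlyPositiveMap⟩

theorem stmt12 {D : ℕ}
    (φ φs : Matrix (Fin D) (Fin D) ℂ →ₗ[ℂ] Matrix (Fin D) (Fin D) ℂ)
    (hadj : ∀ A B : Matrix (Fin D) (Fin D) ℂ, (Aᴴ * φ B).trace = ((φs A)ᴴ * B).trace)
    (hpos : ∀ M : Matrix (Fin D) (Fin D) ℂ, M.PosSemidef → (φ M).PosSemidef) :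
    (∀ M : Matrix (Fin D) (Fin D) ℂ, M.PosSemidef → M ≠ 0 → (φ M).PosDef) ↔
    (∀ M : Matrix (Fin D) (Fin D) ℂ, M.PosSemidef → M ≠ 0 → (φs M).PosDef) :=
  stmt12_general φ φs hadj
end
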